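/- Let G be a real symmetric n×n matrix and let G' be obtained from G by adding 1 to a single diagonal entry (say the (1,1) entry). If all three of det(G), det(G'), and the determinant of the matrix D obtained by deleting the first row and column of G are nonzero, then |det(G)| = |det(G')| + |det(D)| implies that both G and G' have exactly one more negative eigenvalue than D has, assuming D is invertible. -/

import Mathlib

open Matrix

open scoped Classical in
/-- The number of negative eigenvalues (with multiplicity) of a real symmetric matrix. -/
noncomputable def negEigCount {n : Type*} [Fintype n] [DecidableEq n]
    (A : Matrix n n ℝ) : ℕ :=
  if h : A.IsHermitian then (Finset.univ.filter fun i => h.eigenvalues i < 0).card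
  else 0

set_option linter.unusedSectionVars false
section Aux

variable {m : Type*} [Fintype m] [DecidableEq m]

def qf (A : Matrix m m ℝ) (x : m → ℝ) : ℝ := x ⬝ᵥ A *ᵥ x

/-- extension-by-zero linear map from coordinates in a subtype -/
noncomputable def extZero (P : m → Prop) [DecidablePred P] : ({i // P i} → ℝ) →ₗ[ℝ] (m → ℝ) :=
  LinearMap.pi (fun i => if h : P i then LinearMap.proj (⟨i, h⟩ : {i // P i}) else 0)

theorem extZero_apply_pos {P : m → Prop} [DecidablePred P] (y : {i // P i} → ℝ) {i : m}
    (h : P i) : extZero P y i = y ⟨i, h⟩ := by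
  simp [extZero, LinearMap.pi_apply, dif_pos h]

theorem extZero_apply_neg {P : m → Prop} [DecidablePred P] (y : {i // P i} → ℝ) {i : m}
    (h : ¬ P i) : extZero P y i = 0 := by
  simp [extZero, LinearMap.pi_apply, dif_neg h]

theorem extZero_injective (P : m → Prop) [DecidablePred P] :
    Function.Injective (extZero P) := by
  intro y z hyz
  funext j
  have := congrFun hyz j.1
  rwa [extZero_apply_pos y j.2, extZero_apply_pos z j.2] at this

theorem qf_diagonal (d : m → ℝ) (x : m → ℝ) :
    qf (diagonal d) x = ∑ i, d i * x i ^ 2 := by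
  simp [qf, dotProduct, mulVec_diagonal]
  congr 1; funext i; ring

example : True := trivial

def HasNeg (A : Matrix m m ℝ) (k : ℕ) : Prop :=
  ∃ W : Submodule ℝ (m → ℝ), Module.finrank ℝ W = k ∧ ∀ x ∈ W, x ≠ 0 → qf A x < 0

def HasNonneg (A : Matrix m m ℝ) (k : ℕ) : Prop :=
  ∃ W : Submodule ℝ (m → ℝ), Module.finrank ℝ W = k ∧ ∀ x ∈ W, 0 ≤ qf A x

theorem hasNeg_diagonal (d : m → ℝ) [DecidablePred fun i => d i < 0] :
    HasNeg (diagonal d) (Fintype.card {i // d i < 0}) := by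
  refine ⟨LinearMap.range (extZero fun i => d i < 0), ?_, ?_⟩
  · rw [LinearMap.finrank_range_of_inj (extZero_injective _)]
    simp [Module.finrank_fintype_fun_eq_card]
  · rintro x ⟨y, rfl⟩ hx0
    have hy0 : y ≠ 0 := by rintro rfl; simp at hx0
    obtain ⟨j, hj⟩ := Function.ne_iff.mp hy0
    rw [qf_diagonal]
    obtain ⟨i0, hi0⟩ := j
    have hj' : y ⟨i0, hi0⟩ ≠ 0 := by simpa using hj
    refine lt_of_lt_of_eq (Finset.sum_lt_sum (g := fun _ => (0:ℝ)) ?_ ?_) (by simp)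
    · intro i _
      show d i * (extZero (fun i => d i < 0) y i) ^ 2 ≤ 0
      by_cases h : d i < 0
      · rw [extZero_apply_pos y h]
        have : y (⟨i, h⟩ : {i // d i < 0}) ^ 2 ≥ 0 := sq_nonneg _
        nlinarith
      · rw [extZero_apply_neg y h]; simp
    · refine ⟨i0, Finset.mem_univ _, ?_⟩
      show d i0 * (extZero (fun i => d i < 0) y i0) ^ 2 < 0
      rw [extZero_apply_pos y hi0]
      have h1 : 0 < y ⟨i0, hi0⟩ ^ 2 := by rcases lt_or_gt_of_ne hj' with h|h <;> nlinarith
      nlinarith [hi0]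

theorem hasNonneg_diagonal (d : m → ℝ) [DecidablePred fun i => ¬ d i < 0] :
    HasNonneg (diagonal d) (Fintype.card {i // ¬ d i < 0}) := by
  refine ⟨LinearMap.range (extZero fun i => ¬ d i < 0), ?_, ?_⟩
  · rw [LinearMap.finrank_range_of_inj (extZero_injective _)]
    simp [Module.finrank_fintype_fun_eq_card]
  · rintro x ⟨y, rfl⟩
    rw [qf_diagonal]
    apply Finset.sum_nonneg
    intro i _
    by_cases h : ¬ d i < 0
    · rw [extZero_apply_pos y h]
      have := sq_nonneg (y (⟨i, h⟩ : {i // ¬ d i < 0}))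
      nlinarith [not_lt.mp h]
    · rw [extZero_apply_neg y h]; simp

theorem qf_conj (M A : Matrix m m ℝ) (x : m → ℝ) :
    qf (Mᵀ * A * M) x = qf A (M *ᵥ x) := by
  rw [qf, qf, mul_assoc, ← mulVec_mulVec, dotProduct_mulVec, vecMul_transpose, mulVec_mulVec]


theorem mulVec_injective_of_star_mul_self {U : Matrix m m ℝ} (h : star U * U = 1) :
    Function.Injective (U.mulVecLin) := by
  intro x y hxy
  have : star U *ᵥ (U *ᵥ x) = star U *ᵥ (U *ᵥ y) := by
    simpa [Matrix.mulVecLin_apply] using congrArg (fun z => star U *ᵥ z) hxy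
  simpa [mulVec_mulVec, h] using this

variable {m' : Type*} [Fintype m'] [DecidableEq m']

theorem hasNeg_of_map {A : Matrix m m ℝ} {B : Matrix m' m' ℝ} (f : (m' → ℝ) →ₗ[ℝ] (m → ℝ))
    (hf : Function.Injective f) (hq : ∀ y, qf B y = qf A (f y)) {k : ℕ}
    (h : HasNeg B k) : HasNeg A k := by
  obtain ⟨W, hW, hneg⟩ := h
  refine ⟨W.map f, ?_, ?_⟩
  · rw [← hW]; exact (Submodule.equivMapOfInjective f hf W).finrank_eq.symm
  · rintro x hx hx0
    obtain ⟨y, hy, rfl⟩ := Submodule.mem_map.mp hx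
    have hy0 : y ≠ 0 := by rintro rfl; simp at hx0
    rw [← hq]; exact hneg y hy hy0

theorem hasNonneg_of_map {A : Matrix m m ℝ} {B : Matrix m' m' ℝ} (f : (m' → ℝ) →ₗ[ℝ] (m → ℝ))
    (hf : Function.Injective f) (hq : ∀ y, qf B y = qf A (f y)) {k : ℕ}
    (h : HasNonneg B k) : HasNonneg A k := by
  obtain ⟨W, hW, hneg⟩ := h
  refine ⟨W.map f, ?_, ?_⟩
  · rw [← hW]; exact (Submodule.equivMapOfInjective f hf W).finrank_eq.symm
  · rintro x hx
    obtain ⟨y, hy, rfl⟩ := Submodule.mem_map.mp hx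
    rw [← hq]; exact hneg y hy

/-- the key dimension-count bound -/
theorem hasNeg_add_hasNonneg_le {A : Matrix m m ℝ} {j k : ℕ}
    (hj : HasNeg A j) (hk : HasNonneg A k) : j + k ≤ Fintype.card m := by
  obtain ⟨W, hW, hneg⟩ := hj
  obtain ⟨V, hV, hnn⟩ := hk
  have hdisj : W ⊓ V = ⊥ := by
    rw [Submodule.eq_bot_iff]
    rintro x ⟨hxW, hxV⟩
    by_contra hx0
    exact absurd (hnn x hxV) (not_le.mpr (hneg x hxW hx0))
  have := Submodule.finrank_sup_add_finrank_inf_eq W V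
  rw [hdisj] at this
  simp only [finrank_bot, add_zero] at this
  calc j + k = Module.finrank ℝ ↥(W ⊔ V) := by rw [← hW, ← hV, this]
    _ ≤ Module.finrank ℝ (m → ℝ) := Submodule.finrank_le _
    _ = Fintype.card m := by simp [Module.finrank_pi]

theorem hasNeg_hasNonneg_negEigCount {A : Matrix m m ℝ} (hA : A.IsHermitian) :
    HasNeg A (negEigCount A) ∧ HasNonneg A (Fintype.card m - negEigCount A) := by
  classical
  set ev := hA.eigenvalues with hev
  set U : Matrix m m ℝ := (Matrix.IsHermitian.eigenvectorUnitary hA : Matrix m m ℝ) with hU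
  have hstar : star U * U = 1 := Unitary.coe_star_mul_self _
  have hdiag : Uᵀ * A * U = diagonal ev := by
    have := Matrix.IsHermitian.conjStarAlgAut_star_eigenvectorUnitary hA
    rw [Unitary.conjStarAlgAut_star_apply] at this
    simpa [hU, Matrix.star_eq_conjTranspose, Matrix.conjTranspose_eq_transpose_of_trivial,
      Function.comp] using this
  have hq : ∀ y, qf (diagonal ev) y = qf A (U.mulVecLin y) := by
    intro y
    rw [← hdiag, qf_conj, Matrix.mulVecLin_apply]
  have hinj := mulVec_injective_of_star_mul_self hstar
  have hcount : negEigCount A = Fintype.card {i // ev i < 0} := by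
    rw [negEigCount, dif_pos hA, Fintype.card_subtype]
  constructor
  · rw [hcount]
    exact hasNeg_of_map U.mulVecLin hinj hq (hasNeg_diagonal ev)
  · have : Fintype.card m - negEigCount A = Fintype.card {i // ¬ ev i < 0} := by
      rw [hcount, Fintype.card_subtype_compl]
    rw [this]
    exact hasNonneg_of_map U.mulVecLin hinj hq (hasNonneg_diagonal ev)



variable {n : ℕ}


/-- block matrix [[c,0],[0,D]] -/
def blk (c : ℝ) (D : Matrix (Fin n) (Fin n) ℝ) : Matrix (Fin (n+1)) (Fin (n+1)) ℝ :=
  Matrix.of (Fin.cons (Fin.cons c 0) (fun i' => Fin.cons 0 (D i')))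

/-- lower triangular [[1,0],[w,I]] -/
def Pmat (w : Fin n → ℝ) : Matrix (Fin (n+1)) (Fin (n+1)) ℝ :=
  Matrix.of (Fin.cons (Fin.cons 1 0) (fun i' => Fin.cons (w i') (fun j' => if i' = j' then 1 else 0)))

theorem Pmat_mulVec (w : Fin n → ℝ) (x : Fin (n+1) → ℝ) :
    Pmat w *ᵥ x = Fin.cons (x 0) (fun i => w i * x 0 + x i.succ) := by
  funext i
  refine Fin.cases ?_ (fun i' => ?_) i <;>
    simp [Pmat, mulVec, dotProduct, Fin.sum_univ_succ, Finset.sum_ite_eq, mul_comm]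

theorem Pmat_comp (w : Fin n → ℝ) (y : Fin (n+1) → ℝ) :
    Pmat w *ᵥ (Pmat (-w) *ᵥ y) = y := by
  rw [Pmat_mulVec, Pmat_mulVec]
  funext i
  refine Fin.cases ?_ (fun i' => ?_) i <;> simp

theorem qf_blk (c : ℝ) (D : Matrix (Fin n) (Fin n) ℝ) (x : Fin (n+1) → ℝ) :
    qf (blk c D) x = c * x 0 ^ 2 + qf D (x ∘ Fin.succ) := by
  simp only [qf, blk, dotProduct, mulVec, Fin.sum_univ_succ, Matrix.of_apply,
    Fin.cons_zero, Fin.cons_succ]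
  simp [dotProduct, mulVec]
  ring_nf

theorem det_blk (c : ℝ) (D : Matrix (Fin n) (Fin n) ℝ) : (blk c D).det = c * D.det := by
  rw [Matrix.det_succ_row_zero]
  rw [Finset.sum_eq_single 0]
  · simp [blk, Matrix.submatrix]
    exact Or.inl rfl
  · intro j _ hj
    obtain ⟨j', rfl⟩ := Fin.exists_succ_eq.mpr hj
    simp [blk]
  · simp

theorem det_Pmat (w : Fin n → ℝ) : (Pmat w).det = 1 := by
  rw [Matrix.det_succ_row_zero, Finset.sum_eq_single 0]
  · have h1 : ((Pmat w).submatrix Fin.succ (Fin.succAbove 0)) = 1 := by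
      funext i j
      simp [Pmat, Matrix.submatrix, Fin.succAbove_zero, Matrix.one_apply]
    rw [h1]
    simp [Pmat]
  · intro j _ hj
    obtain ⟨j', rfl⟩ := Fin.exists_succ_eq.mpr hj
    simp [Pmat]
  · simp

theorem decomp (G : Matrix (Fin (n+1)) (Fin (n+1)) ℝ) (D : Matrix (Fin n) (Fin n) ℝ)
    (w : Fin n → ℝ)
    (hGsym : ∀ i j, G i j = G j i)
    (hD : ∀ i j, D i j = G i.succ j.succ)
    (hw : ∀ i, ∑ j', D i j' * w j' = G i.succ 0) :
    (Pmat w)ᵀ * blk (G 0 0 - w ⬝ᵥ D *ᵥ w) D * Pmat w = G := by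
  have hDs : ∀ a b, D a b = D b a := by
    intro a b; rw [hD, hD, hGsym]
  funext i j
  rw [Matrix.mul_apply]
  simp only [Matrix.mul_apply, Matrix.transpose_apply]
  refine Fin.cases ?_ (fun i' => ?_) i <;> refine Fin.cases ?_ (fun j' => ?_) j <;>
    simp [Pmat, blk, Fin.sum_univ_succ, dotProduct, mulVec, Finset.mul_sum, Finset.sum_mul,
      mul_ite, Finset.sum_ite_eq, Finset.sum_ite_eq']
  · have h2 : ∑ x : Fin n, ∑ i : Fin n, w i * D i x * w x
        = ∑ x : Fin n, ∑ i : Fin n, w x * (D x i * w i) := by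
      rw [Finset.sum_comm]
      exact Finset.sum_congr rfl fun a _ => Finset.sum_congr rfl fun b _ => by ring
    rw [h2]; ring
  · rw [hGsym, ← hw _]
    exact Finset.sum_congr rfl fun x _ => by rw [mul_comm, hDs]
  · exact hw _
  · exact hD _ _

theorem Pmat_conj_std (w : Fin n → ℝ) :
    (Pmat w)ᵀ * Matrix.single (0 : Fin (n+1)) 0 (1:ℝ) * Pmat w = Matrix.single 0 0 1 := by
  funext i j
  rw [Matrix.mul_apply]
  simp only [Matrix.mul_apply, Matrix.transpose_apply]
  refine Fin.cases ?_ (fun i' => ?_) i <;> refine Fin.cases ?_ (fun j' => ?_) j <;>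
    simp [Pmat, Matrix.single, Fin.sum_univ_succ, Fin.succ_ne_zero, (Fin.succ_ne_zero _).symm]

theorem blk_add_std (c : ℝ) (D : Matrix (Fin n) (Fin n) ℝ) :
    blk (c + 1) D = blk c D + Matrix.single 0 0 1 := by
  funext i j
  refine Fin.cases ?_ (fun i' => ?_) i <;> refine Fin.cases ?_ (fun j' => ?_) j <;>
    simp [blk, Matrix.single, Fin.succ_ne_zero, (Fin.succ_ne_zero _).symm]

def consZeroLM : (Fin n → ℝ) →ₗ[ℝ] (Fin (n+1) → ℝ) where
  toFun y := Fin.cons 0 y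
  map_add' y z := by
    funext i
    refine Fin.cases ?_ (fun i' => ?_) i <;> simp
  map_smul' t y := by
    funext i
    refine Fin.cases ?_ (fun i' => ?_) i <;> simp

theorem consZeroLM_injective : Function.Injective (consZeroLM (n := n)) := by
  intro a b hab
  funext i
  have := congrFun hab i.succ
  simpa [consZeroLM] using this

theorem negEigCount_le_card {m : Type*} [Fintype m] [DecidableEq m] (A : Matrix m m ℝ) :
    negEigCount A ≤ Fintype.card m := by
  rw [negEigCount]
  split
  · exact le_trans (Finset.card_filter_le _ _) (by simp)
  · exact Nat.zero_le _

theorem hasNeg_blk {n : ℕ} {c : ℝ} (hc : c < 0) {D : Matrix (Fin n) (Fin n) ℝ} {k : ℕ}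
    (h : HasNeg D k) : HasNeg (blk c D) (k + 1) := by
  obtain ⟨W, hW, hneg⟩ := h
  have hsingle : ((Pi.single 0 1 : Fin (n+1) → ℝ)) ≠ 0 := by
    intro h0
    have : ((Pi.single 0 1 : Fin (n+1) → ℝ)) 0 = 0 := by rw [h0]; rfl
    simp at this
  refine ⟨(Submodule.span ℝ {(Pi.single 0 1 : Fin (n+1) → ℝ)}) ⊔ W.map consZeroLM, ?_, ?_⟩
  · have hinf : (Submodule.span ℝ {(Pi.single 0 1 : Fin (n+1) → ℝ)}) ⊓ W.map consZeroLM = ⊥ := by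
      rw [Submodule.eq_bot_iff]
      rintro x ⟨hx1, hx2⟩
      obtain ⟨t, rfl⟩ := Submodule.mem_span_singleton.mp hx1
      obtain ⟨y, _, hy⟩ := Submodule.mem_map.mp hx2
      have h0 : t = 0 := by
        have := congrFun hy 0
        simpa [consZeroLM] using this.symm
      simp [h0]
    have := Submodule.finrank_sup_add_finrank_inf_eq
      (Submodule.span ℝ {(Pi.single 0 1 : Fin (n+1) → ℝ)}) (W.map consZeroLM)
    rw [hinf] at this
    simp only [finrank_bot, add_zero] at this
    rw [this, finrank_span_singleton hsingle,
      ← (Submodule.equivMapOfInjective _ consZeroLM_injective W).finrank_eq, hW, add_comm]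
  · rintro x hx hx0
    obtain ⟨a, ha, b, hb, rfl⟩ := Submodule.mem_sup.mp hx
    obtain ⟨t, rfl⟩ := Submodule.mem_span_singleton.mp ha
    obtain ⟨y, hyW, rfl⟩ := Submodule.mem_map.mp hb
    have hx0' : (t • (Pi.single 0 1 : Fin (n+1) → ℝ) + consZeroLM y) 0 = t := by
      simp [consZeroLM]
    have htail : (t • (Pi.single 0 1 : Fin (n+1) → ℝ) + consZeroLM y) ∘ Fin.succ = y := by
      funext i
      simp [consZeroLM, Pi.single_eq_of_ne (Fin.succ_ne_zero i)]
    rw [qf_blk, hx0', htail]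
    have hqd : qf D y ≤ 0 := by
      by_cases hy : y = 0
      · subst hy; simp [qf]
      · exact le_of_lt (hneg y hyW hy)
    by_cases ht : t = 0
    · have hy : y ≠ 0 := by
        rintro rfl
        simp [ht] at hx0
      have := hneg y hyW hy
      nlinarith
    · have h1 : c * t ^ 2 < 0 := by
        have : (0:ℝ) < t ^ 2 := by positivity
        nlinarith
      linarith

theorem hasNonneg_blk {n : ℕ} (c : ℝ) {D : Matrix (Fin n) (Fin n) ℝ} {k : ℕ}
    (h : HasNonneg D k) : HasNonneg (blk c D) k := by
  refine hasNonneg_of_map consZeroLM consZeroLM_injective (fun y => ?_) h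
  have h0 : (consZeroLM (n := n) y) 0 = 0 := by simp [consZeroLM]
  have htail : (consZeroLM (n := n) y) ∘ Fin.succ = y := by
    funext i; simp [consZeroLM]
  rw [qf_blk, h0, htail]
  ring

end Aux

/-- If `G'` differs from the real symmetric matrix `G` by adding `1` to the `(0,0)` entry,
`D` is obtained from `G` by deleting the first row and column, all three determinants are
nonzero, and `|det G| = |det G'| + |det D|`, then `G` and `G'` each have exactly one more
negative eigenvalue than `D`. -/
theorem stmt16 (n : ℕ) (G G' : Matrix (Fin (n + 1)) (Fin (n + 1)) ℝ)
    (hG : G.IsHermitian) (hG' : G'.IsHermitian)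
    (hGG' : G' = G + Matrix.single 0 0 1)
    (D : Matrix (Fin n) (Fin n) ℝ) (hD : D = G.submatrix Fin.succ Fin.succ)
    (hdetG : G.det ≠ 0) (hdetG' : G'.det ≠ 0) (hdetD : D.det ≠ 0)
    (hdets : |G.det| = |G'.det| + |D.det|) :
    negEigCount G = negEigCount D + 1 ∧ negEigCount G' = negEigCount D + 1 := by
    classical
  have hGt : Gᵀ = G := by
    rw [← Matrix.conjTranspose_eq_transpose_of_trivial]; exact hG
  have hGsym : ∀ i j, G i j = G j i := fun i j => (congrFun (congrFun hGt i) j).symm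
  have hDherm : D.IsHermitian := by rw [hD]; exact hG.submatrix _
  set v : Fin n → ℝ := fun i => G i.succ 0 with hv
  have hDunit : IsUnit D.det := isUnit_iff_ne_zero.mpr hdetD
  set w : Fin n → ℝ := D⁻¹ *ᵥ v with hwdef
  have hDw : D *ᵥ w = v := by
    rw [hwdef, Matrix.mulVec_mulVec, Matrix.mul_nonsing_inv D hDunit, Matrix.one_mulVec]
  have hw : ∀ i, ∑ j', D i j' * w j' = G i.succ 0 := by
    intro i
    simpa [Matrix.mulVec, dotProduct] using congrFun hDw i
  have hDel : ∀ i j, D i j = G i.succ j.succ := by intro i j; rw [hD]; rfl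
  set c := G 0 0 - w ⬝ᵥ D *ᵥ w with hc
  have hdec : (Pmat w)ᵀ * blk c D * Pmat w = G := decomp G D w hGsym hDel hw
  have hdec' : (Pmat w)ᵀ * blk (c+1) D * Pmat w = G' := by
    rw [blk_add_std, Matrix.mul_add, Matrix.add_mul, hdec, Pmat_conj_std, hGG']
  have hdG : G.det = c * D.det := by
    rw [← hdec]
    simp [Matrix.det_mul, Matrix.det_transpose, det_Pmat, det_blk]
  have hdG' : G'.det = (c+1) * D.det := by
    rw [← hdec']
    simp [Matrix.det_mul, Matrix.det_transpose, det_Pmat, det_blk]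
  have hDpos : 0 < |D.det| := abs_pos.mpr hdetD
  have habs : |c| = |c+1| + 1 := by
    rw [hdG, hdG', abs_mul, abs_mul] at hdets
    have h2 : |c| * |D.det| = (|c+1| + 1) * |D.det| := by rw [hdets]; ring
    exact mul_right_cancel₀ (ne_of_gt hDpos) h2
  have hc1ne : c + 1 ≠ 0 := by
    intro h0
    rw [hdG'] at hdetG'
    exact hdetG' (by rw [h0]; ring)
  have hc1 : c + 1 < 0 := by
    rcases abs_cases c with ⟨h1, h2⟩ | ⟨h1, h2⟩ <;>
      rcases abs_cases (c+1) with ⟨h3, h4⟩ | ⟨h3, h4⟩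
    · linarith
    · linarith
    · exact absurd (by linarith : c + 1 = 0) hc1ne
    · exact h4
  have hcneg : c < 0 := by linarith
  obtain ⟨hDneg, hDnn⟩ := hasNeg_hasNonneg_negEigCount hDherm
  rw [Fintype.card_fin] at hDnn
  have hinj : Function.Injective ((Pmat (-w)).mulVecLin) := by
    intro a b hab
    have h2 : Pmat w *ᵥ (Pmat (-w) *ᵥ a) = Pmat w *ᵥ (Pmat (-w) *ᵥ b) := by
      rw [show (Pmat (-w) *ᵥ a) = (Pmat (-w)).mulVecLin a from rfl, hab]; rfl
    rwa [Pmat_comp, Pmat_comp] at h2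
  have hqG : ∀ y, qf (blk c D) y = qf G ((Pmat (-w)).mulVecLin y) := by
    intro y
    rw [Matrix.mulVecLin_apply, ← hdec, qf_conj, Pmat_comp]
  have hqG' : ∀ y, qf (blk (c+1) D) y = qf G' ((Pmat (-w)).mulVecLin y) := by
    intro y
    rw [Matrix.mulVecLin_apply, ← hdec', qf_conj, Pmat_comp]
  have hGneg : HasNeg G (negEigCount D + 1) :=
    hasNeg_of_map _ hinj hqG (hasNeg_blk hcneg hDneg)
  have hGnn : HasNonneg G (n - negEigCount D) :=
    hasNonneg_of_map _ hinj hqG (hasNonneg_blk c hDnn)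
  have hG'neg : HasNeg G' (negEigCount D + 1) :=
    hasNeg_of_map _ hinj hqG' (hasNeg_blk hc1 hDneg)
  have hG'nn : HasNonneg G' (n - negEigCount D) :=
    hasNonneg_of_map _ hinj hqG' (hasNonneg_blk (c+1) hDnn)
  obtain ⟨hGneg2, hGnn2⟩ := hasNeg_hasNonneg_negEigCount hG
  obtain ⟨hG'neg2, hG'nn2⟩ := hasNeg_hasNonneg_negEigCount hG'
  rw [Fintype.card_fin] at hGnn2 hG'nn2
  have b1 := hasNeg_add_hasNonneg_le hGneg hGnn2
  have b2 := hasNeg_add_hasNonneg_le hGneg2 hGnn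
  have b3 := hasNeg_add_hasNonneg_le hG'neg hG'nn2
  have b4 := hasNeg_add_hasNonneg_le hG'neg2 hG'nn
  rw [Fintype.card_fin] at b1 b2 b3 b4
  have hqle := negEigCount_le_card G
  have hq'le := negEigCount_le_card G'
  have hple := negEigCount_le_card D
  rw [Fintype.card_fin] at hqle hq'le hple
  constructor <;> omega
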